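/- For every ρ > 0, √(2π(1 − e^{−ρ²/2})) ≤ ∫_{−ρ}^{ρ} e^{−x²/2} dx ≤ √(2π(1 − e^{−ρ²})). -/

import Mathlib

open Real Set intervalIntegral

/-!
Feynman's trick. Put `U t = ∫₀ᵗ e^{-x²/2} dx` and `G t = ∫₀¹ e^{-t²(1+s²)/2} / (1+s²) ds`.
Differentiating under the integral sign and substituting `x = ts` gives
`G' t = -e^{-t²/2} U t = -(U²)' t / 2`, so `U² + 2G` is constant, equal to `2 G 0 = π/2`.
For `s ∈ [0,1]` the exponent in `G` lies between `-t²` and `-t²/2`, whence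
`e^{-t²} π/4 ≤ G t ≤ e^{-t²/2} π/4`. As the integral over `[-ρ, ρ]` is `2 U ρ`, its square
`4 (U ρ)² = 2π - 8 G ρ` lies between `2π (1 - e^{-ρ²/2})` and `2π (1 - e^{-ρ²})`.
-/

theorem integral_neg_to_self_eq_two_smul_of_even {E : Type*} [NormedAddCommGroup E]
    [NormedSpace ℝ E] {f : ℝ → E} (hf : ∀ x, f (-x) = f x) {a : ℝ}
    (hint : IntervalIntegrable f MeasureTheory.volume (-a) a) :
    ∫ x in (-a)..a, f x = (2 : ℝ) • ∫ x in (0 : ℝ)..a, f x := by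
  have h0 : (0 : ℝ) ∈ uIcc (-a) a := by
    rcases le_total 0 a with h | h <;> simp [h]
  have hleft : ∫ x in (-a)..0, f x = ∫ x in (0 : ℝ)..a, f x := by
    simpa [hf] using (integral_comp_neg (a := 0) (b := a) f).symm
  rw [← integral_add_adjacent_intervals (hint.mono_set (uIcc_subset_uIcc_left h0))
    (hint.mono_set (uIcc_subset_uIcc_right h0)), hleft, two_smul]

theorem continuous_div_one_add_sq {f : ℝ → ℝ} (hf : Continuous f) :
    Continuous fun s => f s / (1 + s ^ 2) :=
  hf.div (by fun_prop) fun s => by positivity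

theorem integral_const_div_one_add_sq (c : ℝ) :
    ∫ s in (0 : ℝ)..1, c / (1 + s ^ 2) = c * (π / 4) := by
  simp_rw [div_eq_mul_one_div c]
  rw [integral_const_mul, integral_one_div_one_add_sq, arctan_one, arctan_zero, sub_zero]

noncomputable def gaussPrimitive (t : ℝ) : ℝ := ∫ x in (0 : ℝ)..t, exp (-x ^ 2 / 2)

noncomputable def gaussFeynman (t : ℝ) : ℝ :=
  ∫ s in (0 : ℝ)..1, exp (-t ^ 2 * (1 + s ^ 2) / 2) / (1 + s ^ 2)

theorem hasDerivAt_gaussPrimitive (t : ℝ) :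
    HasDerivAt gaussPrimitive (exp (-t ^ 2 / 2)) t :=
  integral_hasDerivAt_right (Continuous.intervalIntegrable (by fun_prop) _ _)
    (Continuous.stronglyMeasurableAtFilter (by fun_prop) _ _) (by fun_prop)

theorem integral_neg_mul_exp_feynman (t : ℝ) :
    ∫ s in (0 : ℝ)..1, -t * exp (-t ^ 2 * (1 + s ^ 2) / 2) =
      -exp (-t ^ 2 / 2) * gaussPrimitive t := by
  rcases eq_or_ne t 0 with rfl | ht
  · simp [gaussPrimitive]
  have hsplit : ∀ s : ℝ, -t * exp (-t ^ 2 * (1 + s ^ 2) / 2) =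
      -exp (-t ^ 2 / 2) * (t * exp (-(s * t) ^ 2 / 2)) := fun s => by
    rw [show -t ^ 2 * (1 + s ^ 2) / 2 = -t ^ 2 / 2 + -(s * t) ^ 2 / 2 by ring, exp_add]
    ring
  rw [integral_congr fun s _ => hsplit s, integral_const_mul, integral_const_mul,
    integral_comp_mul_right (fun x => exp (-x ^ 2 / 2)) ht]
  simp [gaussPrimitive, ht]

theorem hasDerivAt_gaussFeynman (t : ℝ) :
    HasDerivAt gaussFeynman (-exp (-t ^ 2 / 2) * gaussPrimitive t) t := by
  have hF : ∀ x, Continuous fun s : ℝ => exp (-x ^ 2 * (1 + s ^ 2) / 2) / (1 + s ^ 2) :=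
    fun x => continuous_div_one_add_sq (by fun_prop)
  have hF' : ∀ s x : ℝ, HasDerivAt (fun x => exp (-x ^ 2 * (1 + s ^ 2) / 2) / (1 + s ^ 2))
      (-x * exp (-x ^ 2 * (1 + s ^ 2) / 2)) x := fun s x => by
    have hq : HasDerivAt (fun x : ℝ => -x ^ 2 * (1 + s ^ 2) / 2) (-x * (1 + s ^ 2)) x := by
      refine (((hasDerivAt_pow 2 x).fun_neg.mul_const (1 + s ^ 2)).div_const 2).congr_deriv ?_
      push_cast
      ring
    refine (hq.exp.div_const (1 + s ^ 2)).congr_deriv ?_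
    field_simp
  have hbound : ∀ s, ∀ x ∈ Metric.ball t 1,
      ‖-x * exp (-x ^ 2 * (1 + s ^ 2) / 2)‖ ≤ |t| + 1 := fun s x hx => by
    have hexp : exp (-x ^ 2 * (1 + s ^ 2) / 2) ≤ 1 := exp_le_one_iff.2 (by
      have := mul_nonneg (sq_nonneg x) (by positivity : (0 : ℝ) ≤ 1 + s ^ 2)
      linarith)
    have hx : |x| ≤ |t| + 1 := by
      have := abs_sub_abs_le_abs_sub x t
      rw [Metric.mem_ball, dist_eq] at hx
      linarith
    rw [norm_mul, norm_neg, norm_of_nonneg (exp_pos _).le, norm_eq_abs]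
    calc |x| * exp (-x ^ 2 * (1 + s ^ 2) / 2) ≤ |x| * 1 := by gcongr
      _ ≤ |t| + 1 := by linarith
  have h := hasDerivAt_integral_of_dominated_loc_of_deriv_le (μ := MeasureTheory.volume)
    (a := 0) (b := 1) (Metric.ball_mem_nhds t one_pos)
    (Filter.Eventually.of_forall fun x => (hF x).aestronglyMeasurable)
    ((hF t).intervalIntegrable _ _) (Continuous.aestronglyMeasurable (by fun_prop))
    (MeasureTheory.ae_of_all _ fun s _ => hbound s) intervalIntegrable_const
    (MeasureTheory.ae_of_all _ fun s _ x _ => hF' s x)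
  rw [← integral_neg_mul_exp_feynman]
  exact h.2

theorem gaussPrimitive_sq_add_two_mul_gaussFeynman (t : ℝ) :
    gaussPrimitive t ^ 2 + 2 * gaussFeynman t = π / 2 := by
  have hderiv : ∀ x, HasDerivAt (fun y => gaussPrimitive y ^ 2 + 2 * gaussFeynman y) 0 x :=
    fun x => (((hasDerivAt_gaussPrimitive x).pow 2).add
      ((hasDerivAt_gaussFeynman x).const_mul 2)).congr_deriv (by ring)
  have hG0 : gaussFeynman 0 = π / 4 := by
    simp [gaussFeynman]
  calc gaussPrimitive t ^ 2 + 2 * gaussFeynman t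
      = gaussPrimitive 0 ^ 2 + 2 * gaussFeynman 0 :=
        is_const_of_deriv_eq_zero (fun x => (hderiv x).differentiableAt)
          (fun x => (hderiv x).deriv) t 0
    _ = π / 2 := by rw [hG0]; simp [gaussPrimitive]; ring

theorem gaussFeynman_le (t : ℝ) : gaussFeynman t ≤ exp (-t ^ 2 / 2) * (π / 4) := by
  rw [← integral_const_div_one_add_sq]
  refine integral_mono_on zero_le_one
    ((continuous_div_one_add_sq (by fun_prop)).intervalIntegrable _ _)
    ((continuous_div_one_add_sq continuous_const).intervalIntegrable _ _) fun s _ => ?_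
  gcongr
  nlinarith [mul_nonneg (sq_nonneg t) (sq_nonneg s)]

theorem le_gaussFeynman (t : ℝ) : exp (-t ^ 2) * (π / 4) ≤ gaussFeynman t := by
  rw [← integral_const_div_one_add_sq]
  refine integral_mono_on zero_le_one
    ((continuous_div_one_add_sq continuous_const).intervalIntegrable _ _)
    ((continuous_div_one_add_sq (by fun_prop)).intervalIntegrable _ _) fun s hs => ?_
  have hs2 : s ^ 2 ≤ 1 := by nlinarith [hs.1, hs.2]
  gcongr
  nlinarith [mul_le_mul_of_nonneg_left hs2 (sq_nonneg t)]

/-- Gaussian integral bounds: for `ρ > 0`,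
`√(2π(1 - e^{-ρ²/2})) ≤ ∫_{-ρ}^{ρ} e^{-x²/2} dx ≤ √(2π(1 - e^{-ρ²}))`. -/
theorem gaussian_integral_bounds (ρ : ℝ) (hρ : 0 < ρ) :
    Real.sqrt (2 * π * (1 - Real.exp (-ρ ^ 2 / 2))) ≤
      (∫ x in (-ρ)..ρ, Real.exp (-x ^ 2 / 2)) ∧
    (∫ x in (-ρ)..ρ, Real.exp (-x ^ 2 / 2)) ≤
      Real.sqrt (2 * π * (1 - Real.exp (-ρ ^ 2))) := by
  have hI : ∫ x in (-ρ)..ρ, exp (-x ^ 2 / 2) = 2 * gaussPrimitive ρ :=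
    integral_neg_to_self_eq_two_smul_of_even (fun x => by rw [neg_sq])
      (Continuous.intervalIntegrable (by fun_prop) _ _)
  have hU : 0 ≤ gaussPrimitive ρ := integral_nonneg hρ.le fun x _ => (exp_pos _).le
  have hUG := gaussPrimitive_sq_add_two_mul_gaussFeynman ρ
  have hG_le := gaussFeynman_le ρ
  have hG_ge := le_gaussFeynman ρ
  rw [hI]
  constructor
  · rw [sqrt_le_left (by positivity)]
    nlinarith
  · apply le_sqrt_of_sq_le
    nlinarith
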